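/- Let d be a positive integer, let theta be a real number with theta >= 0, let c be a point of R^d, and let x and y be independent random vectors, each uniformly distributed on the closed unit ball of radius 1 centered at c in R^d. Then the probability that the inner product of (y - x) with (x - c) is at least theta equals the integral over t from 0 to 1 of d * t^(d-1) * max(t^2/4 - theta, 0)^(d/2) dt. -/

import Mathlib

/-!
Completing the square gives `⟪y - x, x - c⟫ = ‖y - c‖² / 4 - ‖x - m‖²` with `m` the midpoint of `c`
and `y`, so for fixed `y` the event is the closed ball around `m` of radius
`√(‖y - c‖² / 4 - θ)`, which (as `θ ≥ 0`) lies inside the unit ball. Its probability is therefore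
`max (‖y - c‖² / 4 - θ) 0 ^ (d / 2)`, and integrating this radial function over `y` in polar
coordinates gives the density `d t ^ (d - 1)` of `‖y - c‖`.
-/

open MeasureTheory
open scoped RealInnerProductSpace

/-- The uniform probability distribution on the closed unit ball of radius 1
centered at `c` in `ℝ^d`: the restriction of Lebesgue measure to the ball,
normalized to total mass 1. -/
noncomputable def uniformUnitBall (d : ℕ) (c : EuclideanSpace ℝ (Fin d)) :
    Measure (EuclideanSpace ℝ (Fin d)) :=
  (volume (Metric.closedBall c 1))⁻¹ • volume.restrict (Metric.closedBall c 1)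

open Metric Set

section InnerProductSpace

variable {E : Type*} [NormedAddCommGroup E] [InnerProductSpace ℝ E]

theorem inner_sub_sub_eq_sub_norm_sub_midpoint_sq (c x y : E) :
    ⟪y - x, x - c⟫ = ‖y - c‖ ^ 2 / 4 - ‖x - midpoint ℝ c y‖ ^ 2 := by
  simp only [midpoint_eq_smul_add, invOf_eq_inv, ← real_inner_self_eq_norm_sq, inner_sub_left,
    inner_sub_right, inner_add_right, real_inner_smul_right, real_inner_comm]
  ring

theorem setOf_le_inner_eq_closedBall {θ : ℝ} {c y : E} (h : θ ≤ ‖y - c‖ ^ 2 / 4) :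
    {x | θ ≤ ⟪y - x, x - c⟫} = closedBall (midpoint ℝ c y) √(‖y - c‖ ^ 2 / 4 - θ) := by
  ext x
  rw [mem_ofPred_eq, mem_closedBall, dist_eq_norm, inner_sub_sub_eq_sub_norm_sub_midpoint_sq,
    Real.le_sqrt (norm_nonneg _) (by linarith)]
  constructor <;> intro <;> linarith

theorem setOf_le_inner_eq_empty {θ : ℝ} {c y : E} (h : ‖y - c‖ ^ 2 / 4 < θ) :
    {x | θ ≤ ⟪y - x, x - c⟫} = ∅ := by
  refine eq_empty_of_forall_notMem fun x hx => ?_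
  rw [mem_ofPred_eq, inner_sub_sub_eq_sub_norm_sub_midpoint_sq] at hx
  nlinarith [sq_nonneg ‖x - midpoint ℝ c y‖]

theorem closedBall_midpoint_subset_closedBall {c y : E} {r R : ℝ} (hy : y ∈ closedBall c R)
    (hr : r ≤ ‖y - c‖ / 2) : closedBall (midpoint ℝ c y) r ⊆ closedBall c R := by
  refine closedBall_subset_closedBall' ?_
  rw [mem_closedBall, dist_eq_norm] at hy
  rw [dist_midpoint_left, dist_comm, dist_eq_norm]
  norm_num
  linarith

end InnerProductSpace

section Polar

variable {E F : Type*} [NormedAddCommGroup E] [NormedSpace ℝ E] [Nontrivial E]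
  [FiniteDimensional ℝ E] [MeasurableSpace E] [BorelSpace E] (μ : Measure E) [μ.IsAddHaarMeasure]
  [NormedAddCommGroup F] [NormedSpace ℝ F]

theorem setIntegral_closedBall_fun_norm_sub (f : ℝ → F) (c : E) (R : ℝ) :
    ∫ x in closedBall c R, f ‖x - c‖ ∂μ =
      Module.finrank ℝ E • μ.real (ball 0 1) •
        ∫ t in Ioc 0 R, t ^ (Module.finrank ℝ E - 1) • f t := by
  have h_indicator : (closedBall c R).indicator (fun x => f ‖x - c‖) =
      fun x => (Iic R).indicator f ‖x - c‖ := by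
    ext x
    simp only [indicator, mem_closedBall, dist_eq_norm, mem_Iic]
  have h_radial : (fun t : ℝ => t ^ (Module.finrank ℝ E - 1) • (Iic R).indicator f t) =
      (Iic R).indicator fun t => t ^ (Module.finrank ℝ E - 1) • f t := by
    ext t
    by_cases ht : t ∈ Iic R <;> simp [ht]
  rw [← integral_indicator measurableSet_closedBall, h_indicator,
    integral_sub_right_eq_self (fun x => (Iic R).indicator f ‖x‖) c,
    integral_fun_norm_addHaar μ, h_radial, setIntegral_indicator measurableSet_Iic,
    Ioi_inter_Iic]

end Polar

section UniformUnitBall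

variable {d : ℕ} {c : EuclideanSpace ℝ (Fin d)}

instance isProbabilityMeasure_uniformUnitBall : IsProbabilityMeasure (uniformUnitBall d c) := by
  constructor
  rw [uniformUnitBall, Measure.smul_apply, Measure.restrict_apply_univ, smul_eq_mul,
    ENNReal.inv_mul_cancel (measure_closedBall_pos volume c one_pos).ne'
      measure_closedBall_lt_top.ne]

theorem ae_mem_closedBall_uniformUnitBall : ∀ᵐ y ∂uniformUnitBall d c, y ∈ closedBall c 1 :=
  Measure.ae_smul_measure (ae_restrict_mem measurableSet_closedBall) _

theorem uniformUnitBall_closedBall {m : EuclideanSpace ℝ (Fin d)} {r : ℝ} (hr : 0 ≤ r)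
    (h : closedBall m r ⊆ closedBall c 1) :
    uniformUnitBall d c (closedBall m r) = ENNReal.ofReal (r ^ d) := by
  rw [uniformUnitBall, Measure.smul_apply, Measure.restrict_apply measurableSet_closedBall,
    inter_eq_left.mpr h, smul_eq_mul, Measure.addHaar_closedBall' volume m hr,
    Measure.addHaar_closedBall' volume c zero_le_one, finrank_euclideanSpace_fin, one_pow,
    ENNReal.ofReal_one, one_mul, mul_comm (ENNReal.ofReal _), ENNReal.inv_mul_cancel_left
      (measure_closedBall_pos volume 0 one_pos).ne' measure_closedBall_lt_top.ne]

theorem integral_uniformUnitBall_fun_norm_sub (hd : 0 < d) (f : ℝ → ℝ) :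
    ∫ x, f ‖x - c‖ ∂uniformUnitBall d c = d * ∫ t in Ioc 0 1, t ^ (d - 1) * f t := by
  have : Nontrivial (EuclideanSpace ℝ (Fin d)) :=
    Module.nontrivial_of_finrank_pos (R := ℝ) (by rwa [finrank_euclideanSpace_fin])
  rw [uniformUnitBall, integral_smul_measure, setIntegral_closedBall_fun_norm_sub,
    finrank_euclideanSpace_fin, Measure.addHaar_closedBall volume c zero_le_one, one_pow,
    ENNReal.ofReal_one, one_mul, ENNReal.toReal_inv, ← measureReal_def]
  have h_ne : volume.real (ball (0 : EuclideanSpace ℝ (Fin d)) 1) ≠ 0 :=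
    ENNReal.toReal_ne_zero.mpr ⟨(measure_ball_pos volume 0 one_pos).ne', measure_ball_lt_top.ne⟩
  simp only [smul_eq_mul, nsmul_eq_mul]
  field_simp

theorem uniformUnitBall_setOf_le_inner (hd : 0 < d) {θ : ℝ} (hθ : 0 ≤ θ)
    {y : EuclideanSpace ℝ (Fin d)} (hy : y ∈ closedBall c 1) :
    uniformUnitBall d c {x | θ ≤ ⟪y - x, x - c⟫} =
      ENNReal.ofReal (max (‖y - c‖ ^ 2 / 4 - θ) 0 ^ ((d : ℝ) / 2)) := by
  rcases le_or_gt θ (‖y - c‖ ^ 2 / 4) with h | h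
  · have h_radius : √(‖y - c‖ ^ 2 / 4 - θ) ≤ ‖y - c‖ / 2 :=
      Real.sqrt_le_iff.mpr ⟨by positivity, by linarith [div_pow ‖y - c‖ 2 2]⟩
    rw [setOf_le_inner_eq_closedBall h, uniformUnitBall_closedBall (Real.sqrt_nonneg _)
      (closedBall_midpoint_subset_closedBall hy h_radius), max_eq_left (sub_nonneg.mpr h),
      Real.rpow_div_two_eq_sqrt _ (sub_nonneg.mpr h), Real.rpow_natCast]
  · rw [setOf_le_inner_eq_empty h, measure_empty, max_eq_right (by linarith),
      Real.zero_rpow (by positivity), ENNReal.ofReal_zero]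

end UniformUnitBall

theorem separability_theta_nonneg (d : ℕ) (hd : 0 < d) (θ : ℝ) (hθ : 0 ≤ θ)
    (c : EuclideanSpace ℝ (Fin d)) :
    (((uniformUnitBall d c).prod (uniformUnitBall d c))
      {p : EuclideanSpace ℝ (Fin d) × EuclideanSpace ℝ (Fin d) |
        θ ≤ ⟪p.2 - p.1, p.1 - c⟫}).toReal
      = ∫ t in (0:ℝ)..1,
          (d : ℝ) * t ^ (d - 1) * (max (t ^ 2 / 4 - θ) 0) ^ ((d : ℝ) / 2) := by
  set g : ℝ → ℝ := fun t => max (t ^ 2 / 4 - θ) 0 ^ ((d : ℝ) / 2)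
  have h_event : MeasurableSet {p : EuclideanSpace ℝ (Fin d) × EuclideanSpace ℝ (Fin d) |
      θ ≤ ⟪p.2 - p.1, p.1 - c⟫} :=
    measurableSet_le measurable_const (by fun_prop)
  have h_slices : ∀ᵐ y ∂uniformUnitBall d c,
      uniformUnitBall d c ((fun x => (x, y)) ⁻¹' {p | θ ≤ ⟪p.2 - p.1, p.1 - c⟫}) =
        ENNReal.ofReal (g ‖y - c‖) := by
    filter_upwards [ae_mem_closedBall_uniformUnitBall] with y hy
      using uniformUnitBall_setOf_le_inner hd hθ hy
  have h_meas : AEStronglyMeasurable (fun y => g ‖y - c‖) (uniformUnitBall d c) := by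
    simp only [g]
    fun_prop (disch := positivity)
  rw [Measure.prod_apply_symm h_event, lintegral_congr_ae h_slices,
    ← integral_eq_lintegral_of_nonneg_ae (ae_of_all _ fun _ => by positivity) h_meas,
    integral_uniformUnitBall_fun_norm_sub hd, intervalIntegral.integral_of_le zero_le_one,
    ← integral_const_mul]
  simp only [g, mul_assoc]
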